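/- arXiv:2301.05765 — 9 statements merged into one kernel-verified Lean document; each statement's English description precedes it below -/
import Mathlib

section
/- Let s ↦ (t,x,v,a,p_t,p_x,p_v,p_a)(s) be a differentiable solution of the 1D Hamiltonian geodesic system (H1) with initial conditions t(0)=x(0)=v(0)=a(0)=0. Then p_t and p_x are constant functions, and for every s one has p_v(s) = −p_x·t(s) + p_v(0) and p_a(s) = p_x·t(s)²/2 − p_v(0)·t(s) + p_a(0). Consequently the curve γ(s) = (t,x,v,a)(s) satisfies γ'(s) = α₁(s)·(1, v(s), a(s), 0) + α₂(s)·(0,0,0,1), where α₁(s) = v(s)·p_x + a(s)·(−p_x·t(s) + p_v(0)) + p_t and α₂(s) = p_x·t(s)²/2 − p_v(0)·t(s) + p_a(0). -/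
/-! Along a solution, `p_t` and `p_x` have zero derivative, and then `p_v' = -p_x(0)·t'` and
`p_a' = -p_v·t' = (p_x(0)·t - p_v(0))·t'`. So `p_v` and `p_a` are polynomials in `t`, fixed by
the chain rule and their values at `s = 0`, where `t = 0`. Substituting them into
`h = v·p_x + a·p_v + p_t` expresses `γ'` through `α₁ = h` and `α₂ = p_a`. -/

section

variable {𝕜 E : Type*} [RCLike 𝕜] [NormedAddCommGroup E] [NormedSpace 𝕜 E]

theorem is_const_of_hasDerivAt_zero {f : 𝕜 → E} (hf : ∀ s, HasDerivAt f 0 s) (s r : 𝕜) :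
    f s = f r :=
  is_const_of_deriv_eq_zero (fun y => (hf y).differentiableAt) (fun y => (hf y).deriv) s r

theorem eq_comp_of_hasDerivAt {f F F' : 𝕜 → E} {t h : 𝕜 → 𝕜}
    (hF : ∀ τ, HasDerivAt F (F' τ) τ) (ht : ∀ s, HasDerivAt t (h s) s)
    (hf : ∀ s, HasDerivAt f (h s • F' (t s)) s) (h0 : f 0 = F (t 0)) (s : 𝕜) :
    f s = F (t s) := by
  have hdiff : ∀ s, HasDerivAt (fun s => f s - F (t s)) 0 s := fun s =>
    ((hf s).sub ((hF (t s)).scomp s (ht s))).congr_deriv (sub_self _)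
  simpa [h0, sub_eq_zero] using is_const_of_hasDerivAt_zero hdiff s 0

end

theorem stmt_0_general
    (t x v a pt px pv pa : ℝ → ℝ)
    (h : ℝ → ℝ)
    (hh : ∀ s, h s = v s * px s + a s * pv s + pt s)
    (hpt : ∀ s, HasDerivAt pt 0 s)
    (hpx : ∀ s, HasDerivAt px 0 s)
    (hpv : ∀ s, HasDerivAt pv (-(px s) * h s) s)
    (hpa : ∀ s, HasDerivAt pa (-(pv s) * h s) s)
    (ht : ∀ s, HasDerivAt t (h s) s)
    (hx : ∀ s, HasDerivAt x (v s * h s) s)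
    (hv : ∀ s, HasDerivAt v (a s * h s) s)
    (ha : ∀ s, HasDerivAt a (pa s) s)
    (ht0 : t 0 = 0) :
    (∀ s, pt s = pt 0) ∧
    (∀ s, px s = px 0) ∧
    (∀ s, pv s = -(px 0) * t s + pv 0) ∧
    (∀ s, pa s = px 0 * t s ^ 2 / 2 - pv 0 * t s + pa 0) ∧
    (∀ s,
      HasDerivAt t ((v s * px 0 + a s * (-(px 0) * t s + pv 0) + pt 0) * 1) s ∧
      HasDerivAt x ((v s * px 0 + a s * (-(px 0) * t s + pv 0) + pt 0) * v s) s ∧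
      HasDerivAt v ((v s * px 0 + a s * (-(px 0) * t s + pv 0) + pt 0) * a s) s ∧
      HasDerivAt a (px 0 * t s ^ 2 / 2 - pv 0 * t s + pa 0) s) := by
  have hpt_const : ∀ s, pt s = pt 0 := fun s => is_const_of_hasDerivAt_zero hpt s 0
  have hpx_const : ∀ s, px s = px 0 := fun s => is_const_of_hasDerivAt_zero hpx s 0
  have hpv_eq : ∀ s, pv s = -(px 0) * t s + pv 0 :=
    eq_comp_of_hasDerivAt (F := fun τ => -(px 0) * τ + pv 0) (F' := fun _ => -(px 0))
      (fun τ => (((hasDerivAt_id τ).const_mul _).add_const _).congr_deriv (mul_one _)) ht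
      (fun s => (hpv s).congr_deriv (by rw [hpx_const s, smul_eq_mul, mul_comm]))
      (by simp [ht0])
  have hpa_eq : ∀ s, pa s = px 0 * t s ^ 2 / 2 - pv 0 * t s + pa 0 :=
    eq_comp_of_hasDerivAt (F := fun τ => px 0 * τ ^ 2 / 2 - pv 0 * τ + pa 0)
      (F' := fun τ => px 0 * τ - pv 0)
      (fun τ => (((((hasDerivAt_pow 2 τ).const_mul _).div_const 2).sub
        ((hasDerivAt_id τ).const_mul _)).add_const _).congr_deriv (by push_cast; ring)) ht
      (fun s => (hpa s).congr_deriv (by rw [hpv_eq s, smul_eq_mul]; ring))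
      (by simp [ht0])
  have hh_eq : ∀ s, h s = v s * px 0 + a s * (-(px 0) * t s + pv 0) + pt 0 := fun s => by
    rw [hh s, hpx_const s, hpv_eq s, hpt_const s]
  refine ⟨hpt_const, hpx_const, hpv_eq, hpa_eq, fun s => ⟨?_, ?_, ?_, ?_⟩⟩
  · simpa [hh_eq s] using ht s
  · simpa [hh_eq s, mul_comm] using hx s
  · simpa [hh_eq s, mul_comm] using hv s
  · simpa [hpa_eq s] using ha s

/-- For a differentiable solution of the 1D Hamiltonian geodesic
system (H1) starting with `t 0 = x 0 = v 0 = a 0 = 0`, the momenta `p_t, p_x` are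
constant, `p_v (s) = -p_x · t s + p_v 0`, `p_a (s) = p_x · t s ^ 2 / 2 - p_v 0 · t s + p_a 0`,
and the projected curve `γ = (t, x, v, a)` satisfies
`γ' = α₁ · (1, v, a, 0) + α₂ · (0, 0, 0, 1)`. -/
theorem stmt_0
    (t x v a pt px pv pa : ℝ → ℝ)
    (h : ℝ → ℝ)
    (hh : ∀ s, h s = v s * px s + a s * pv s + pt s)
    (hpt : ∀ s, HasDerivAt pt 0 s)
    (hpx : ∀ s, HasDerivAt px 0 s)
    (hpv : ∀ s, HasDerivAt pv (-(px s) * h s) s)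
    (hpa : ∀ s, HasDerivAt pa (-(pv s) * h s) s)
    (ht : ∀ s, HasDerivAt t (h s) s)
    (hx : ∀ s, HasDerivAt x (v s * h s) s)
    (hv : ∀ s, HasDerivAt v (a s * h s) s)
    (ha : ∀ s, HasDerivAt a (pa s) s)
    (ht0 : t 0 = 0) (hx0 : x 0 = 0) (hv0 : v 0 = 0) (ha0 : a 0 = 0) :
    (∀ s, pt s = pt 0) ∧
    (∀ s, px s = px 0) ∧
    (∀ s, pv s = -(px 0) * t s + pv 0) ∧
    (∀ s, pa s = px 0 * t s ^ 2 / 2 - pv 0 * t s + pa 0) ∧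
    (∀ s,
      HasDerivAt t ((v s * px 0 + a s * (-(px 0) * t s + pv 0) + pt 0) * 1) s ∧
      HasDerivAt x ((v s * px 0 + a s * (-(px 0) * t s + pv 0) + pt 0) * v s) s ∧
      HasDerivAt v ((v s * px 0 + a s * (-(px 0) * t s + pv 0) + pt 0) * a s) s ∧
      HasDerivAt a (px 0 * t s ^ 2 / 2 - pv 0 * t s + pa 0) s) :=
  stmt_0_general t x v a pt px pv pa h hh hpt hpx hpv hpa ht hx hv ha ht0
end

section
/- There exists an absolute constant K > 0 such that for every (x₁,v₁,a₁) ∈ ℝ³ there exist real constants e₀, e₁, e₂ and a three-times continuously differentiable function x : [0,1] → ℝ with x(0) = x'(0) = x''(0) = 0, x'''(t) = e₀ + e₁·t + e₂·t²/2 on [0,1], (x(1), x'(1), x''(1)) = (x₁, v₁, a₁), and ∫₀¹ √(1 + x'''(t)²) dt ≤ K·(1 + |x₁| + |v₁| + |a₁|). -/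
private lemma aux_hasDerivAt (A B C : ℝ) (p q r : ℕ) (t : ℝ) :
    HasDerivAt (fun t : ℝ => A * t ^ p + B * t ^ q + C * t ^ r)
      (A * (p * t ^ (p - 1)) + B * (q * t ^ (q - 1)) + C * (r * t ^ (r - 1))) t :=
  (((hasDerivAt_pow p t).const_mul A).add ((hasDerivAt_pow q t).const_mul B)).add
    ((hasDerivAt_pow r t).const_mul C)

/-- There is an absolute constant `K > 0` such that every target
`(x₁, v₁, a₁)` can be reached from the origin by an admissible curve with polynomial
jerk whose sub-Riemannian length `∫₀¹ √(1 + x'''(t)²) dt` is at most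
`K · (1 + |x₁| + |v₁| + |a₁|)`. -/
theorem stmt_4 :
    ∃ K : ℝ, 0 < K ∧ ∀ x₁ v₁ a₁ : ℝ,
      ∃ (e₀ e₁ e₂ : ℝ) (x : ℝ → ℝ), ContDiff ℝ 3 x ∧
        x 0 = 0 ∧ deriv x 0 = 0 ∧ deriv (deriv x) 0 = 0 ∧
        (∀ t ∈ Set.Icc (0 : ℝ) 1,
          deriv (deriv (deriv x)) t = e₀ + e₁ * t + e₂ * t ^ 2 / 2) ∧
        x 1 = x₁ ∧ deriv x 1 = v₁ ∧ deriv (deriv x) 1 = a₁ ∧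
        (∫ t in (0 : ℝ)..1, Real.sqrt (1 + deriv (deriv (deriv x)) t ^ 2))
          ≤ K * (1 + |x₁| + |v₁| + |a₁|) := by
  refine ⟨1000, by norm_num, fun x₁ v₁ a₁ => ?_⟩
  set e₀ : ℝ := 60 * x₁ - 24 * v₁ + 3 * a₁ with he₀
  set e₁ : ℝ := -360 * x₁ + 168 * v₁ - 24 * a₁ with he₁
  set e₂ : ℝ := 720 * x₁ - 360 * v₁ + 60 * a₁ with he₂
  set A : ℝ := e₀ / 6 with hA
  set B : ℝ := e₁ / 24 with hB
  set C : ℝ := e₂ / 120 with hC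
  set x : ℝ → ℝ := fun t => A * t ^ 3 + B * t ^ 4 + C * t ^ 5 with hxdef
  have hx1 : deriv x = fun t => (3 * A) * t ^ 2 + (4 * B) * t ^ 3 + (5 * C) * t ^ 4 := by
    funext t
    have h := aux_hasDerivAt A B C 3 4 5 t
    rw [hxdef]
    rw [h.deriv]
    push_cast; ring
  have hx2 : deriv (deriv x)
      = fun t => (6 * A) * t ^ 1 + (12 * B) * t ^ 2 + (20 * C) * t ^ 3 := by
    funext t
    rw [hx1]
    have h := aux_hasDerivAt (3 * A) (4 * B) (5 * C) 2 3 4 t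
    rw [h.deriv]
    push_cast; ring
  have hx3 : deriv (deriv (deriv x)) = fun t => e₀ + e₁ * t + e₂ * t ^ 2 / 2 := by
    funext t
    rw [hx2]
    have h := aux_hasDerivAt (6 * A) (12 * B) (20 * C) 1 2 3 t
    rw [h.deriv]
    push_cast
    rw [hA, hB, hC]; ring
  refine ⟨e₀, e₁, e₂, x, ?_, ?_, ?_, ?_, ?_, ?_, ?_, ?_, ?_⟩
  · rw [hxdef]; fun_prop
  · simp [hxdef]
  · rw [hx1]; norm_num
  · rw [hx2]; norm_num
  · intro t _; rw [hx3]
  · rw [hxdef]; simp only [one_pow, mul_one]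
    rw [hA, hB, hC, he₀, he₁, he₂]; ring
  · rw [hx1]; simp only [one_pow, mul_one]
    rw [hA, hB, hC, he₀, he₁, he₂]; ring
  · rw [hx2]; simp only [one_pow, mul_one]
    rw [hA, hB, hC, he₀, he₁, he₂]; ring
  · -- length bound
    simp only [hx3]
    set M : ℝ := |e₀| + |e₁| + |e₂| / 2 with hM
    have hM0 : 0 ≤ M := by positivity
    have hbound : ∀ t ∈ Set.Icc (0 : ℝ) 1,
        Real.sqrt (1 + (e₀ + e₁ * t + e₂ * t ^ 2 / 2) ^ 2) ≤ 1 + M := by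
      intro t ht
      obtain ⟨ht0, ht1⟩ := ht
      have hj : |e₀ + e₁ * t + e₂ * t ^ 2 / 2| ≤ M := by
        have h3 : |e₀ + e₁ * t + e₂ * t ^ 2 / 2|
            ≤ |e₀| + |e₁ * t| + |e₂ * t ^ 2 / 2| := abs_add_three _ _ _
        have h4 : |e₁ * t| ≤ |e₁| := by
          rw [abs_mul, abs_of_nonneg ht0]
          nlinarith [abs_nonneg e₁]
        have h5 : |e₂ * t ^ 2 / 2| ≤ |e₂| / 2 := by
          rw [abs_div, abs_mul, abs_of_nonneg (sq_nonneg t)]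
          have : t ^ 2 ≤ 1 := by nlinarith
          have h2 : |(2 : ℝ)| = 2 := by norm_num
          rw [h2]
          nlinarith [abs_nonneg e₂]
        rw [hM]; linarith
      have h6 : 1 + (e₀ + e₁ * t + e₂ * t ^ 2 / 2) ^ 2 ≤ (1 + M) ^ 2 := by
        nlinarith [sq_abs (e₀ + e₁ * t + e₂ * t ^ 2 / 2), abs_nonneg (e₀ + e₁ * t + e₂ * t ^ 2 / 2)]
      calc Real.sqrt (1 + (e₀ + e₁ * t + e₂ * t ^ 2 / 2) ^ 2)
          ≤ Real.sqrt ((1 + M) ^ 2) := Real.sqrt_le_sqrt h6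
        _ = 1 + M := Real.sqrt_sq (by linarith)
    have hcont : Continuous (fun t : ℝ => Real.sqrt (1 + (e₀ + e₁ * t + e₂ * t ^ 2 / 2) ^ 2)) := by
      fun_prop
    have hint : (∫ t in (0 : ℝ)..1, Real.sqrt (1 + (e₀ + e₁ * t + e₂ * t ^ 2 / 2) ^ 2))
        ≤ ∫ _ in (0 : ℝ)..1, (1 + M) := by
      apply intervalIntegral.integral_mono_on (by norm_num)
        (hcont.intervalIntegrable 0 1) (intervalIntegrable_const) hbound
    rw [intervalIntegral.integral_const] at hint
    simp only [smul_eq_mul, sub_zero, one_mul] at hint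
    have hfin : 1 + M ≤ 1000 * (1 + |x₁| + |v₁| + |a₁|) := by
      have b0 : |e₀| ≤ 60 * |x₁| + 24 * |v₁| + 3 * |a₁| := by
        rw [he₀]
        calc |60 * x₁ - 24 * v₁ + 3 * a₁| ≤ |60 * x₁ - 24 * v₁| + |3 * a₁| := abs_add_le _ _
          _ ≤ |60 * x₁| + |24 * v₁| + |3 * a₁| := by
              have := abs_sub (60 * x₁) (24 * v₁); linarith
          _ = 60 * |x₁| + 24 * |v₁| + 3 * |a₁| := by
              rw [abs_mul, abs_mul, abs_mul]; norm_num
      have b1 : |e₁| ≤ 360 * |x₁| + 168 * |v₁| + 24 * |a₁| := by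
        rw [he₁]
        calc |-360 * x₁ + 168 * v₁ - 24 * a₁| ≤ |-360 * x₁ + 168 * v₁| + |24 * a₁| := by
              have := abs_sub (-360 * x₁ + 168 * v₁) (24 * a₁); linarith
          _ ≤ |(-360) * x₁| + |168 * v₁| + |24 * a₁| := by
              have := abs_add_le (-360 * x₁) (168 * v₁); linarith
          _ = 360 * |x₁| + 168 * |v₁| + 24 * |a₁| := by
              rw [abs_mul, abs_mul, abs_mul]; norm_num
      have b2 : |e₂| ≤ 720 * |x₁| + 360 * |v₁| + 60 * |a₁| := by
        rw [he₂]
        calc |720 * x₁ - 360 * v₁ + 60 * a₁| ≤ |720 * x₁ - 360 * v₁| + |60 * a₁| := abs_add_le _ _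
          _ ≤ |720 * x₁| + |360 * v₁| + |60 * a₁| := by
              have := abs_sub (720 * x₁) (360 * v₁); linarith
          _ = 720 * |x₁| + 360 * |v₁| + 60 * |a₁| := by
              rw [abs_mul, abs_mul, abs_mul]; norm_num
      rw [hM]
      have h7 := abs_nonneg x₁
      have h8 := abs_nonneg v₁
      have h9 := abs_nonneg a₁
      linarith
    exact hint.trans hfin
end

section
/- On ℝ⁶ with coordinates (x,y,t,θ,v,a), consider the smooth vector fields X₁ = v·cosθ·∂_x + v·sinθ·∂_y + a·∂_v + ∂_t, X₂ = ∂_θ, X₃ = ∂_a. Their Lie brackets satisfy [X₁, X₂] = v·sinθ·∂_x − v·cosθ·∂_y, [X₃, X₁] = ∂_v, and [[X₃,X₁], X₁] = cosθ·∂_x + sinθ·∂_y. Moreover, at every point with v ≠ 0, the six vectors X₁, X₂, X₃, [X₁,X₂], [X₃,X₁], [[X₃,X₁],X₁] are linearly independent, hence span the tangent space ℝ⁶. -/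
open ContinuousLinearMap in
lemma X1_hasFDerivAt (p : Fin 6 → ℝ) :
    HasFDerivAt (fun p : Fin 6 → ℝ =>
        ![p 4 * Real.cos (p 3), p 4 * Real.sin (p 3), (1:ℝ), 0, p 5, 0])
      (ContinuousLinearMap.pi
        (![p 4 • ((-Real.sin (p 3)) • proj 3) + Real.cos (p 3) • proj 4,
          p 4 • (Real.cos (p 3) • proj 3) + Real.sin (p 3) • proj 4,
          0, 0, proj 5, 0] :
          Fin 6 → ((Fin 6 → ℝ) →L[ℝ] ℝ))) p := by
  apply hasFDerivAt_pi''
  intro i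
  fin_cases i <;>
    simp only [Matrix.cons_val_zero, Matrix.cons_val_one, Matrix.head_cons,
      Matrix.cons_val_two, Matrix.tail_cons, Matrix.cons_val_three,
      Matrix.cons_val_four, ContinuousLinearMap.proj_pi, Fin.isValue]
  · exact (hasFDerivAt_apply 4 p).mul ((hasFDerivAt_apply 3 p).cos)
  · exact (hasFDerivAt_apply 4 p).mul ((hasFDerivAt_apply 3 p).sin)
  · exact hasFDerivAt_const _ _
  · exact hasFDerivAt_const _ _
  · exact hasFDerivAt_apply 5 p
  · exact hasFDerivAt_const _ _

lemma cons_val_five' {α : Type*} (a b c d e f : α) : ![a,b,c,d,e,f] 5 = f := rfl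

/-- On `ℝ⁶` with coordinates `(x, y, t, θ, v, a)` (indices
`0,…,5`), the vector fields `X₁ = v cosθ ∂_x + v sinθ ∂_y + a ∂_v + ∂_t`,
`X₂ = ∂_θ`, `X₃ = ∂_a` satisfy `[X₁, X₂] = v sinθ ∂_x − v cosθ ∂_y`,
`[X₃, X₁] = ∂_v`, `[[X₃,X₁], X₁] = cosθ ∂_x + sinθ ∂_y`, and at every point with
`v ≠ 0` the six vectors `X₁, X₂, X₃, [X₁,X₂], [X₃,X₁], [[X₃,X₁],X₁]` are linearly
independent and span the tangent space `ℝ⁶`. -/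
theorem stmt_8
    (X₁ X₂ X₃ : (Fin 6 → ℝ) → (Fin 6 → ℝ))
    (hX₁ : X₁ = fun p =>
      ![p 4 * Real.cos (p 3), p 4 * Real.sin (p 3), 1, 0, p 5, 0])
    (hX₂ : X₂ = fun _ => ![0, 0, 0, 1, 0, 0])
    (hX₃ : X₃ = fun _ => ![0, 0, 0, 0, 0, 1]) :
    VectorField.lieBracket ℝ X₁ X₂
      = (fun p => ![p 4 * Real.sin (p 3), -(p 4 * Real.cos (p 3)), 0, 0, 0, 0]) ∧
    VectorField.lieBracket ℝ X₃ X₁ = (fun _ => ![0, 0, 0, 0, 1, 0]) ∧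
    VectorField.lieBracket ℝ (VectorField.lieBracket ℝ X₃ X₁) X₁
      = (fun p => ![Real.cos (p 3), Real.sin (p 3), 0, 0, 0, 0]) ∧
    (∀ p : Fin 6 → ℝ, p 4 ≠ 0 →
      LinearIndependent ℝ
        ![X₁ p, X₂ p, X₃ p, VectorField.lieBracket ℝ X₁ X₂ p,
          VectorField.lieBracket ℝ X₃ X₁ p,
          VectorField.lieBracket ℝ (VectorField.lieBracket ℝ X₃ X₁) X₁ p]) ∧
    (∀ p : Fin 6 → ℝ, p 4 ≠ 0 →
      Submodule.span ℝ
        (Set.range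
          ![X₁ p, X₂ p, X₃ p, VectorField.lieBracket ℝ X₁ X₂ p,
            VectorField.lieBracket ℝ X₃ X₁ p,
            VectorField.lieBracket ℝ (VectorField.lieBracket ℝ X₃ X₁) X₁ p]) = ⊤) := by
  open ContinuousLinearMap in
  have hd : ∀ p, fderiv ℝ X₁ p = ContinuousLinearMap.pi
        (![p 4 • ((-Real.sin (p 3)) • proj 3) + Real.cos (p 3) • proj 4,
          p 4 • (Real.cos (p 3) • proj 3) + Real.sin (p 3) • proj 4,
          0, 0, proj 5, 0] :
          Fin 6 → ((Fin 6 → ℝ) →L[ℝ] ℝ)) := fun p => by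
    rw [hX₁]; exact (X1_hasFDerivAt p).fderiv
  have b12 : VectorField.lieBracket ℝ X₁ X₂
      = (fun p => ![p 4 * Real.sin (p 3), -(p 4 * Real.cos (p 3)), 0, 0, 0, 0]) := by
    funext p
    rw [VectorField.lieBracket, hd p, hX₂]
    funext i
    fin_cases i <;>
      simp [fderiv_const, Matrix.cons_val_succ, cons_val_five']
  have b31 : VectorField.lieBracket ℝ X₃ X₁ = (fun _ => ![0, 0, 0, 0, 1, 0]) := by
    funext p
    rw [VectorField.lieBracket, hd p, hX₃]
    funext i
    fin_cases i <;>
      simp [fderiv_const, Matrix.cons_val_succ, cons_val_five']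
  have b331 : VectorField.lieBracket ℝ (VectorField.lieBracket ℝ X₃ X₁) X₁
      = (fun p => ![Real.cos (p 3), Real.sin (p 3), 0, 0, 0, 0]) := by
    funext p
    rw [VectorField.lieBracket, hd p, b31]
    funext i
    fin_cases i <;>
      simp [fderiv_const, Matrix.cons_val_succ, cons_val_five']
  have li : ∀ p : Fin 6 → ℝ, p 4 ≠ 0 →
      LinearIndependent ℝ
        ![X₁ p, X₂ p, X₃ p, VectorField.lieBracket ℝ X₁ X₂ p,
          VectorField.lieBracket ℝ X₃ X₁ p,
          VectorField.lieBracket ℝ (VectorField.lieBracket ℝ X₃ X₁) X₁ p] := by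
    intro p hv
    rw [b331, b12, b31, hX₁, hX₂, hX₃]
    rw [Fintype.linearIndependent_iff]
    intro g hg
    simp only [Fin.sum_univ_six, Matrix.cons_val_zero, Matrix.cons_val_one,
      Matrix.head_cons, Matrix.cons_val_two, Matrix.tail_cons, Matrix.cons_val_three,
      Matrix.cons_val_four, cons_val_five'] at hg
    have h0 := congrFun hg 0
    have h1 := congrFun hg 1
    have h2 := congrFun hg 2
    have h3 := congrFun hg 3
    have h4 := congrFun hg 4
    have h5 := congrFun hg 5
    simp [Fin.sum_univ_six, Matrix.cons_val_succ, cons_val_five', Matrix.vecHead, Matrix.vecTail] at h0 h1 h2 h3 h4 h5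
    have hsc := Real.sin_sq_add_cos_sq (p 3)
    have hg0 : g 0 = 0 := h2
    have hg1 : g 1 = 0 := by linarith
    have hg2 : g 2 = 0 := h5
    rw [hg0] at h0 h1 h4
    have hg4 : g 4 = 0 := by linarith [h4]
    have hg3 : g 3 = 0 := by
      have : g 3 * p 4 = 0 := by
        linear_combination Real.sin (p 3) * h0 - Real.cos (p 3) * h1 - g 3 * p 4 * hsc
      exact (mul_eq_zero.1 this).resolve_right hv
    rw [hg3] at h0 h1
    have hg5 : g 5 = 0 := by
      linear_combination Real.cos (p 3) * h0 + Real.sin (p 3) * h1 - g 5 * hsc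
    intro i; fin_cases i <;> assumption
  refine ⟨b12, b31, b331, li, fun p hv => ?_⟩
  exact (li p hv).span_eq_top_of_card_eq_finrank (by simp)
end

section
/- Let s ↦ (x,y,t,θ,v,a,p_x,p_y,p_t,p_θ,p_v,p_a)(s) be a differentiable solution of the 2D Hamiltonian geodesic system (H2). Then p_x, p_y and p_t are constant functions, and the function s ↦ ψ(s)² + p_θ(s)² + p_a(s)², where ψ(s) = v(s)·(cosθ(s)·p_x + sinθ(s)·p_y) + a(s)·p_v(s) + p_t, is constant. -/
/-!
The momenta `p_x, p_y, p_t` have zero derivative. Differentiating `ψ`, the terms `a·ψ·(cos θ·p_x +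
sin θ·p_y)` coming from `v'` and from `p_v'` cancel, leaving
`ψ' = -v·(sin θ·p_x - cos θ·p_y)·p_θ + p_a·p_v`. Hence `(ψ, p_θ, p_a)` moves orthogonally to
itself, `ψ ψ' + p_θ p_θ' + p_a p_a' = 0`, so its squared length is conserved.
-/

open Real

theorem eq_of_hasDerivAt_zero {𝕜 G : Type*} [RCLike 𝕜] [NormedAddCommGroup G] [NormedSpace 𝕜 G]
    {f : 𝕜 → G} (hf : ∀ s, HasDerivAt f 0 s) (s r : 𝕜) : f s = f r :=
  is_const_of_deriv_eq_zero (fun u => (hf u).differentiableAt) (fun u => (hf u).deriv) s r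

theorem sq_add_sq_add_sq_eq_of_hasDerivAt {f g h f' g' h' : ℝ → ℝ}
    (hf : ∀ s, HasDerivAt f (f' s) s) (hg : ∀ s, HasDerivAt g (g' s) s)
    (hh : ∀ s, HasDerivAt h (h' s) s) (horth : ∀ s, f s * f' s + g s * g' s + h s * h' s = 0)
    (s r : ℝ) : f s ^ 2 + g s ^ 2 + h s ^ 2 = f r ^ 2 + g r ^ 2 + h r ^ 2 := by
  refine eq_of_hasDerivAt_zero (f := fun u => f u ^ 2 + g u ^ 2 + h u ^ 2) (fun u => ?_) s r
  refine ((((hf u).fun_pow 2).fun_add ((hg u).fun_pow 2)).fun_add ((hh u).fun_pow 2)).congr_deriv ?_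
  linear_combination 2 * horth u

theorem hasDerivAt_psi {θ v a px py pt pθ pv pa : ℝ → ℝ} {s k : ℝ}
    (hpx : HasDerivAt px 0 s) (hpy : HasDerivAt py 0 s) (hpt : HasDerivAt pt 0 s)
    (hpv : HasDerivAt pv (-(cos (θ s) * px s + sin (θ s) * py s) * k) s)
    (hv : HasDerivAt v (a s * k) s) (hθ : HasDerivAt θ (pθ s) s) (ha : HasDerivAt a (pa s) s) :
    HasDerivAt (fun u => v u * (cos (θ u) * px u + sin (θ u) * py u) + a u * pv u + pt u)
      (-(v s * (sin (θ s) * px s - cos (θ s) * py s) * pθ s) + pa s * pv s) s := by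
  refine ((hv.fun_mul ((hθ.cos.fun_mul hpx).fun_add (hθ.sin.fun_mul hpy))).fun_add
    (ha.fun_mul hpv)).fun_add hpt |>.congr_deriv ?_
  ring

theorem stmt_9_general
    (θ v a px py pt pθ pv pa : ℝ → ℝ)
    (ψ : ℝ → ℝ)
    (hψ : ∀ s, ψ s = v s * (Real.cos (θ s) * px s + Real.sin (θ s) * py s)
        + a s * pv s + pt s)
    (hpx : ∀ s, HasDerivAt px 0 s)
    (hpy : ∀ s, HasDerivAt py 0 s)
    (hpt : ∀ s, HasDerivAt pt 0 s)
    (hpv : ∀ s, HasDerivAt pv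
      (-(Real.cos (θ s) * px s + Real.sin (θ s) * py s) * ψ s) s)
    (hpθ : ∀ s, HasDerivAt pθ
      (v s * (Real.sin (θ s) * px s - Real.cos (θ s) * py s) * ψ s) s)
    (hpa : ∀ s, HasDerivAt pa (-(pv s) * ψ s) s)
    (hv : ∀ s, HasDerivAt v (a s * ψ s) s)
    (hθ : ∀ s, HasDerivAt θ (pθ s) s)
    (ha : ∀ s, HasDerivAt a (pa s) s) :
    (∀ s, px s = px 0) ∧ (∀ s, py s = py 0) ∧ (∀ s, pt s = pt 0) ∧
    (∀ s, ψ s ^ 2 + pθ s ^ 2 + pa s ^ 2 = ψ 0 ^ 2 + pθ 0 ^ 2 + pa 0 ^ 2) := by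
  have hψ' : ∀ s, HasDerivAt ψ
      (-(v s * (sin (θ s) * px s - cos (θ s) * py s) * pθ s) + pa s * pv s) s := fun s => by
    rw [funext hψ]
    exact hasDerivAt_psi (hpx s) (hpy s) (hpt s) (hpv s) (hv s) (hθ s) (ha s)
  refine ⟨(eq_of_hasDerivAt_zero hpx · 0), (eq_of_hasDerivAt_zero hpy · 0),
    (eq_of_hasDerivAt_zero hpt · 0), (sq_add_sq_add_sq_eq_of_hasDerivAt hψ' hpθ hpa ?_ · 0)⟩
  intro s
  ring

/-- Along any differentiable solution of the 2D Hamiltonian geodesic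
system (H2), the momenta `p_x, p_y, p_t` are constant and the quantity
`ψ² + p_θ² + p_a²`, with `ψ = v(cosθ·p_x + sinθ·p_y) + a·p_v + p_t`, is constant. -/
theorem stmt_9
    (x y t θ v a px py pt pθ pv pa : ℝ → ℝ)
    (ψ : ℝ → ℝ)
    (hψ : ∀ s, ψ s = v s * (Real.cos (θ s) * px s + Real.sin (θ s) * py s)
        + a s * pv s + pt s)
    (hpx : ∀ s, HasDerivAt px 0 s)
    (hpy : ∀ s, HasDerivAt py 0 s)
    (hpt : ∀ s, HasDerivAt pt 0 s)
    (hpv : ∀ s, HasDerivAt pv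
      (-(Real.cos (θ s) * px s + Real.sin (θ s) * py s) * ψ s) s)
    (hpθ : ∀ s, HasDerivAt pθ
      (v s * (Real.sin (θ s) * px s - Real.cos (θ s) * py s) * ψ s) s)
    (hpa : ∀ s, HasDerivAt pa (-(pv s) * ψ s) s)
    (hx : ∀ s, HasDerivAt x (v s * Real.cos (θ s) * ψ s) s)
    (hy : ∀ s, HasDerivAt y (v s * Real.sin (θ s) * ψ s) s)
    (ht : ∀ s, HasDerivAt t (ψ s) s)
    (hv : ∀ s, HasDerivAt v (a s * ψ s) s)
    (hθ : ∀ s, HasDerivAt θ (pθ s) s)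
    (ha : ∀ s, HasDerivAt a (pa s) s) :
    (∀ s, px s = px 0) ∧ (∀ s, py s = py 0) ∧ (∀ s, pt s = pt 0) ∧
    (∀ s, ψ s ^ 2 + pθ s ^ 2 + pa s ^ 2 = ψ 0 ^ 2 + pθ 0 ^ 2 + pa 0 ^ 2) :=
  stmt_9_general θ v a px py pt pθ pv pa ψ hψ hpx hpy hpt hpv hpθ hpa hv hθ ha
end

section
/- Let k, j, a, v : [0,1] → ℝ be continuous with v(s) ≠ 0 for all s, and define the matrix-valued functions A(s) = [[−k(s), 1, 0], [j(s), 0, 1], [0, 0, 0]] and B(s) = [[a(s)/v(s), 0, −k(s)/v(s)], [0, 0, 0], [k(s)·v(s), −1, 0]]. If Λ = (λ₁, λ₂, λ₃) : [0,1] → ℝ³ is a differentiable row-vector function satisfying Λ(s)·A(s) = 0 and Λ'(s) = Λ(s)·B(s) for all s ∈ [0,1], then Λ is identically zero. (Hence, by Giovannardi's singularity criterion, admissible curves γ' = X₁ + k·X₂ + j·X₃ in the 6-dimensional feature space are regular.) -/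
/-- (Regularity of admissible curves in the 6D feature space via
Giovannardi's singularity criterion.) With `A(s)`, `B(s)` the matrices of the
admissibility system along an admissible curve `γ' = X₁ + k X₂ + j X₃` (with velocity
`v` nowhere zero), any differentiable row-vector field `Λ` satisfying `Λ·A = 0` and
`Λ' = Λ·B` on `[0,1]` vanishes identically; hence admissible curves are regular. -/
theorem stmt_11
    (k j a v : ℝ → ℝ)
    (hk : ContinuousOn k (Set.Icc (0 : ℝ) 1))
    (hj : ContinuousOn j (Set.Icc (0 : ℝ) 1))
    (ha : ContinuousOn a (Set.Icc (0 : ℝ) 1))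
    (hv : ContinuousOn v (Set.Icc (0 : ℝ) 1))
    (hv0 : ∀ s ∈ Set.Icc (0 : ℝ) 1, v s ≠ 0)
    (A B : ℝ → Matrix (Fin 3) (Fin 3) ℝ)
    (hA : ∀ s, A s = !![-(k s), 1, 0; j s, 0, 1; 0, 0, 0])
    (hB : ∀ s, B s = !![a s / v s, 0, -(k s) / v s; 0, 0, 0; k s * v s, -1, 0])
    (Λ : ℝ → (Fin 3 → ℝ))
    (hΛA : ∀ s ∈ Set.Icc (0 : ℝ) 1, Matrix.vecMul (Λ s) (A s) = 0)
    (hΛ' : ∀ s ∈ Set.Icc (0 : ℝ) 1,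
      HasDerivWithinAt Λ (Matrix.vecMul (Λ s) (B s)) (Set.Icc (0 : ℝ) 1) s) :
    ∀ s ∈ Set.Icc (0 : ℝ) 1, Λ s = 0 := by
  have h1 : ∀ s ∈ Set.Icc (0:ℝ) 1, Λ s 0 = 0 := by
    intro s hs
    have := congrFun (hΛA s hs) 1
    simpa [hA, Matrix.vecMul, dotProduct, Fin.sum_univ_three, Matrix.vecHead, Matrix.vecTail] using this
  have h2 : ∀ s ∈ Set.Icc (0:ℝ) 1, Λ s 1 = 0 := by
    intro s hs
    have := congrFun (hΛA s hs) 2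
    simpa [hA, Matrix.vecMul, dotProduct, Fin.sum_univ_three, Matrix.vecHead, Matrix.vecTail] using this
  intro s hs
  have h3 : Λ s 2 = 0 := by
    have hd : HasDerivWithinAt (fun t => Λ t 1) (Matrix.vecMul (Λ s) (B s) 1)
        (Set.Icc 0 1) s := (hasDerivWithinAt_pi.mp (hΛ' s hs)) 1
    have hz : HasDerivWithinAt (fun t => Λ t 1) 0 (Set.Icc (0:ℝ) 1) s :=
      (hasDerivWithinAt_const s _ (0:ℝ)).congr h2 (h2 s hs)
    have hu := (uniqueDiffOn_Icc (zero_lt_one)) s hs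
    have heq : Matrix.vecMul (Λ s) (B s) 1 = 0 := by
      rw [← hd.derivWithin hu, hz.derivWithin hu]
    have : -(Λ s 2) = 0 := by
      simpa [hB, Matrix.vecMul, dotProduct, Fin.sum_univ_three, Matrix.vecHead, Matrix.vecTail] using heq
    linarith
  funext i
  fin_cases i <;> simp [h1 s hs, h2 s hs, h3]
end

section
/- Let A be the constant 3×3 matrix [[0,0,0],[1,0,0],[0,0,0]]. For continuous v_H = (v_{H₁}, v_{H₂}, v_{H₃}) : [0,1] → ℝ³, let V_V : [0,1] → ℝ³ be the solution of V_V'(s) = −A·v_H(s) with V_V(0) = 0. Then V_V(1) = (0, −∫₀¹ v_{H₁}(s) ds, 0); in particular the holonomy map v_H ↦ V_V(1) has image contained in the line ℝ·(0,1,0) and is not surjective onto ℝ³ (hence integral curves of X₃ in the 6-dimensional feature space are singular). -/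
/-! The admissibility system has constant coefficients, so `V_V(1) = −A·∫₀¹ v_H`. For the
matrix of `X₃` only the first component of `v_H` survives and it lands on the second axis:
the holonomy map has rank one, so it cannot reach `(1, 0, 0)`. -/

/-- The image of the holonomy map along an integral curve of `X₃`: the set of values
`V_V(1)` of solutions of `V_V' = −A·v_H` with `V_V(0) = 0`, as the continuous
horizontal datum `v_H` varies. -/
def holonomyImage (A : Matrix (Fin 3) (Fin 3) ℝ) : Set (Fin 3 → ℝ) :=
  {w | ∃ vH VV : ℝ → (Fin 3 → ℝ), Continuous vH ∧
    (∀ s ∈ Set.Icc (0 : ℝ) 1,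
      HasDerivWithinAt VV (-(A.mulVec (vH s))) (Set.Icc (0 : ℝ) 1) s) ∧
    VV 0 = 0 ∧ VV 1 = w}

open Set Matrix

theorem sub_eq_intervalIntegral_of_hasDerivWithinAt_Icc {E : Type*} [NormedAddCommGroup E]
    [NormedSpace ℝ E] [CompleteSpace E] {a b : ℝ} (hab : a ≤ b) {V f : ℝ → E}
    (hf : IntervalIntegrable f MeasureTheory.volume a b)
    (hV : ∀ s ∈ Icc a b, HasDerivWithinAt V (f s) (Icc a b) s) :
    V b - V a = ∫ s in a..b, f s :=
  (intervalIntegral.integral_eq_sub_of_hasDeriv_right_of_le hab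
    (fun s hs => (hV s hs).continuousWithinAt)
    (fun s hs => (hV s (Ioo_subset_Icc_self hs)).mono_of_mem_nhdsWithin
      (Icc_mem_nhdsGT_of_mem (Ioo_subset_Ico_self hs)))
    hf).symm

theorem holonomy_endpoint_eq_intervalIntegral {n : Type*} [Fintype n]
    (A : Matrix n n ℝ) {vH VV : ℝ → n → ℝ} (hvH : Continuous vH)
    (hVV : ∀ s ∈ Icc (0 : ℝ) 1, HasDerivWithinAt VV (-(A *ᵥ vH s)) (Icc 0 1) s)
    (h0 : VV 0 = 0) :
    VV 1 = ∫ s in (0 : ℝ)..1, -(A *ᵥ vH s) := by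
  have hcont : Continuous fun s => -(A *ᵥ vH s) := by fun_prop
  simpa [h0] using
    sub_eq_intervalIntegral_of_hasDerivWithinAt_Icc zero_le_one (hcont.intervalIntegrable 0 1) hVV

theorem mulVec_X₃_matrix (w : Fin 3 → ℝ) :
    !![0, 0, 0; 1, 0, 0; 0, 0, 0] *ᵥ w = w 0 • ![0, 1, 0] := by
  ext i
  fin_cases i <;> simp [vecHead]

theorem holonomy_endpoint_X₃ {vH VV : ℝ → Fin 3 → ℝ} (hvH : Continuous vH)
    (hVV : ∀ s ∈ Icc (0 : ℝ) 1,
      HasDerivWithinAt VV (-(!![0, 0, 0; 1, 0, 0; 0, 0, 0] *ᵥ vH s)) (Icc 0 1) s)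
    (h0 : VV 0 = 0) :
    VV 1 = (-∫ s in (0 : ℝ)..1, vH s 0) • ![0, 1, 0] := by
  rw [holonomy_endpoint_eq_intervalIntegral _ hvH hVV h0]
  simp only [mulVec_X₃_matrix, ← neg_smul, intervalIntegral.integral_smul_const,
    intervalIntegral.integral_neg]

/-- For the admissibility system of an integral curve of `X₃`, with
`A = [[0,0,0],[1,0,0],[0,0,0]]`, the solution of `V_V' = −A·v_H`, `V_V(0) = 0`
satisfies `V_V(1) = (0, −∫₀¹ v_H₁, 0)`; hence the holonomy map has image contained in
the line `ℝ·(0,1,0)` and is not surjective onto `ℝ³`, so integral curves of `X₃` are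
singular. -/
theorem stmt_12
    (A : Matrix (Fin 3) (Fin 3) ℝ)
    (hA : A = !![0, 0, 0; 1, 0, 0; 0, 0, 0]) :
    (∀ vH VV : ℝ → (Fin 3 → ℝ), Continuous vH →
      (∀ s ∈ Set.Icc (0 : ℝ) 1,
        HasDerivWithinAt VV (-(A.mulVec (vH s))) (Set.Icc (0 : ℝ) 1) s) →
      VV 0 = 0 →
      VV 1 = ![0, -∫ s in (0 : ℝ)..1, vH s 0, 0]) ∧
    (holonomyImage A ⊆ {w | ∃ c : ℝ, w = c • ![0, 1, 0]}) ∧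
    holonomyImage A ≠ Set.univ := by
  subst hA
  have image_subset : holonomyImage !![0, 0, 0; 1, 0, 0; 0, 0, 0] ⊆
      {w | ∃ c : ℝ, w = c • ![0, 1, 0]} := by
    rintro w ⟨vH, VV, hvH, hVV, h0, rfl⟩
    exact ⟨_, holonomy_endpoint_X₃ hvH hVV h0⟩
  refine ⟨fun vH VV hvH hVV h0 => ?_, image_subset, fun h_univ => ?_⟩
  · rw [holonomy_endpoint_X₃ hvH hVV h0]
    ext i
    fin_cases i <;> simp
  · obtain ⟨c, hc⟩ := image_subset (h_univ ▸ mem_univ ![1, 0, 0])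
    simpa using congrFun hc 0
end

section
/- Let s ↦ (t,x,v,a,p_t,p_x,p_v,p_a)(s) be a differentiable solution of the 1D Hamiltonian geodesic system (H1) with t(0)=x(0)=v(0)=a(0)=0 and p_t(0) > 0, and set h(s) = p_t + v(s)·p_x + a(s)·p_v(s). If S > 0 is such that p_a(s)² < p_t² + p_a(0)² for all s ∈ [0,S], then h(s) = √(p_t² + p_a(0)² − p_a(s)²) > 0 for all s ∈ [0,S]. -/
/-! Along a solution, `h' = p_a p_v` while `p_a' = -p_v h`, so `(h, p_a)` rotates and
`h² + p_a²` is conserved; at `s = 0` it equals `p_t² + p_a(0)²`. Hence `h` and the square root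
have the same square on `[0, S]`; the square root does not vanish there, and both are continuous
and agree at `s = 0` (where `h = p_t > 0`), so by connectedness of `[0, S]` they agree everywhere. -/

open Set

theorem sq_add_sq_eq_of_hasDerivAt {f g k : ℝ → ℝ}
    (hf : ∀ s, HasDerivAt f (g s * k s) s) (hg : ∀ s, HasDerivAt g (-k s * f s) s) (s r : ℝ) :
    f s ^ 2 + g s ^ 2 = f r ^ 2 + g r ^ 2 := by
  have hderiv : ∀ s, HasDerivAt (fun s => f s ^ 2 + g s ^ 2) 0 s := fun s =>
    (((hf s).pow 2).add ((hg s).pow 2)).congr_deriv (by ring)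
  exact is_const_of_deriv_eq_zero (fun s => (hderiv s).differentiableAt) (fun s => (hderiv s).deriv)
    s r

theorem hasDerivAt_of_geodesic_eqs {v a pt px pv pa h : ℝ → ℝ}
    (hh : ∀ s, h s = pt s + v s * px s + a s * pv s)
    (hpt : ∀ s, HasDerivAt pt 0 s) (hpx : ∀ s, HasDerivAt px 0 s)
    (hpv : ∀ s, HasDerivAt pv (-(px s) * h s) s)
    (hv : ∀ s, HasDerivAt v (a s * h s) s) (ha : ∀ s, HasDerivAt a (pa s) s) (s : ℝ) :
    HasDerivAt h (pa s * pv s) s := by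
  rw [show h = fun s => pt s + v s * px s + a s * pv s from funext hh]
  exact (((hpt s).add ((hv s).mul (hpx s))).add ((ha s).mul (hpv s))).congr_deriv (by ring)

theorem stmt_13_general
    (v a pt px pv pa : ℝ → ℝ)
    (h : ℝ → ℝ)
    (hh : ∀ s, h s = pt s + v s * px s + a s * pv s)
    (hpt : ∀ s, HasDerivAt pt 0 s)
    (hpx : ∀ s, HasDerivAt px 0 s)
    (hpv : ∀ s, HasDerivAt pv (-(px s) * h s) s)
    (hpa : ∀ s, HasDerivAt pa (-(pv s) * h s) s)
    (hv : ∀ s, HasDerivAt v (a s * h s) s)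
    (ha : ∀ s, HasDerivAt a (pa s) s)
    (hv0 : v 0 = 0) (ha0 : a 0 = 0)
    (hpt0 : 0 < pt 0)
    (S : ℝ)
    (hbound : ∀ s ∈ Set.Icc (0 : ℝ) S, pa s ^ 2 < pt 0 ^ 2 + pa 0 ^ 2) :
    ∀ s ∈ Set.Icc (0 : ℝ) S,
      h s = Real.sqrt (pt 0 ^ 2 + pa 0 ^ 2 - pa s ^ 2) ∧ 0 < h s := by
  intro s hs
  have hh' := hasDerivAt_of_geodesic_eqs hh hpt hpx hpv hv ha
  have h0 : h 0 = pt 0 := by simp [hh, hv0, ha0]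
  have hsq : ∀ r, h r ^ 2 = pt 0 ^ 2 + pa 0 ^ 2 - pa r ^ 2 := fun r => by
    have := sq_add_sq_eq_of_hasDerivAt hh' hpa r 0
    rw [h0] at this
    linarith
  set g := fun r => Real.sqrt (pt 0 ^ 2 + pa 0 ^ 2 - pa r ^ 2)
  have hg_pos : ∀ r ∈ Icc 0 S, 0 < g r := fun r hr => Real.sqrt_pos.2 (sub_pos.2 (hbound r hr))
  have hpa_cont : Continuous pa := continuous_iff_continuousAt.2 fun r => (hpa r).continuousAt
  have h_cont : Continuous h := continuous_iff_continuousAt.2 fun r => (hh' r).continuousAt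
  have heq : EqOn h g (Icc 0 S) :=
    isPreconnected_Icc.eq_of_sq_eq h_cont.continuousOn (by fun_prop)
      (fun r hr => by simp [g, hsq, Real.sq_sqrt (sub_pos.2 (hbound r hr)).le])
      (fun hr => (hg_pos _ hr).ne') (left_mem_Icc.2 (hs.1.trans hs.2))
      (by simp [g, h0, Real.sqrt_sq hpt0.le])
  exact ⟨heq hs, heq hs ▸ hg_pos s hs⟩

/-- For a solution of (H1) starting at the origin with `p_t(0) > 0`,
as long as `p_a(s)² < p_t² + p_a(0)²` on `[0, S]`, the factor
`h = p_t + v·p_x + a·p_v` satisfies `h(s) = √(p_t² + p_a(0)² − p_a(s)²) > 0`. -/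
theorem stmt_13
    (t x v a pt px pv pa : ℝ → ℝ)
    (h : ℝ → ℝ)
    (hh : ∀ s, h s = pt s + v s * px s + a s * pv s)
    (hpt : ∀ s, HasDerivAt pt 0 s)
    (hpx : ∀ s, HasDerivAt px 0 s)
    (hpv : ∀ s, HasDerivAt pv (-(px s) * h s) s)
    (hpa : ∀ s, HasDerivAt pa (-(pv s) * h s) s)
    (ht : ∀ s, HasDerivAt t (h s) s)
    (hx : ∀ s, HasDerivAt x (v s * h s) s)
    (hv : ∀ s, HasDerivAt v (a s * h s) s)
    (ha : ∀ s, HasDerivAt a (pa s) s)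
    (ht0 : t 0 = 0) (hx0 : x 0 = 0) (hv0 : v 0 = 0) (ha0 : a 0 = 0)
    (hpt0 : 0 < pt 0)
    (S : ℝ) (hS : 0 < S)
    (hbound : ∀ s ∈ Set.Icc (0 : ℝ) S, pa s ^ 2 < pt 0 ^ 2 + pa 0 ^ 2) :
    ∀ s ∈ Set.Icc (0 : ℝ) S,
      h s = Real.sqrt (pt 0 ^ 2 + pa 0 ^ 2 - pa s ^ 2) ∧ 0 < h s :=
  stmt_13_general v a pt px pv pa h hh hpt hpx hpv hpa hv ha hv0 ha0 hpt0 S hbound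
end

section
/- Fix T > 0 and x₀, x_T ∈ ℝ. Among all three-times continuously differentiable functions x : [0,T] → ℝ satisfying x(0) = x₀, x(T) = x_T, x'(0) = x'(T) = 0 and x''(0) = x''(T) = 0, the functional J(x) = ∫₀ᵀ x'''(t)² dt is minimized by the quintic polynomial x(t) = x₀ + (x_T − x₀)·(10·(t/T)³ − 15·(t/T)⁴ + 6·(t/T)⁵); that is, J of this quintic is less than or equal to J(x) for every such x. -/
/-!
For an admissible `x`, write `x = q + u`, where `u` and its first two derivatives vanish at both
endpoints. Since `q` is a quintic, `q⁽⁶⁾ = 0` (the Euler–Lagrange equation of the jerk functional),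
and integrating `∫ q''' u'''` by parts three times moves every derivative onto `q'''`, so the cross
term vanishes and `J(x) = J(q) + ∫ u'''² ≥ J(q)`.
-/

open intervalIntegral

theorem Polynomial.iterate_deriv_eval (p : Polynomial ℝ) (k : ℕ) :
    deriv^[k] (fun t => p.eval t) = fun t => (Polynomial.derivative^[k] p).eval t := by
  induction k generalizing p with
  | zero => rfl
  | succ k ih =>
    have hderiv : _root_.deriv (fun t => p.eval t) = fun t => p.derivative.eval t := by
      ext; simp
    rw [Function.iterate_succ_apply, hderiv, ih, ← Function.iterate_succ_apply]

section IterateDeriv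

variable {f g : ℝ → ℝ} {n k : ℕ}

theorem ContDiff.differentiable_iterate_deriv (hf : ContDiff ℝ n f) (hk : k < n) :
    Differentiable ℝ (deriv^[k] f) := by
  simpa only [iteratedDeriv_eq_iterate] using
    hf.differentiable_iteratedDeriv k (by exact_mod_cast hk)

theorem ContDiff.continuous_iterate_deriv (hf : ContDiff ℝ n f) (hk : k ≤ n) :
    Continuous (deriv^[k] f) := by
  simpa only [iteratedDeriv_eq_iterate] using hf.continuous_iteratedDeriv k (by exact_mod_cast hk)

theorem iterate_deriv_sub (hf : ContDiff ℝ n f) (hg : ContDiff ℝ n g) (hk : k ≤ n) :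
    deriv^[k] (f - g) = deriv^[k] f - deriv^[k] g := by
  ext t
  simpa only [iteratedDeriv_eq_iterate, Pi.sub_apply] using
    iteratedDeriv_sub (hf.of_le (by exact_mod_cast hk)).contDiffAt
      (hg.of_le (by exact_mod_cast hk)).contDiffAt

end IterateDeriv

section Orthogonality

variable {a b : ℝ}

theorem integral_mul_iterate_deriv_eq_zero (m : ℕ) {p u : ℝ → ℝ} (hp : ContDiff ℝ m p)
    (hpm : deriv^[m] p = 0) (hu : ContDiff ℝ m u) (ha : ∀ k < m, deriv^[k] u a = 0)
    (hb : ∀ k < m, deriv^[k] u b = 0) :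
    ∫ t in a..b, p t * deriv^[m] u t = 0 := by
  induction m generalizing p with
  | zero => simp [show p = 0 from hpm]
  | succ m ih =>
    rw [Nat.cast_succ] at hp
    obtain ⟨hp_diff, -, hp'⟩ := contDiff_succ_iff_deriv.mp hp
    have hu_cont : Continuous (deriv (deriv^[m] u)) := by
      rw [← Function.iterate_succ_apply' deriv]
      exact hu.continuous_iterate_deriv le_rfl
    rw [Function.iterate_succ_apply', integral_mul_deriv_eq_deriv_mul
      (fun t _ => (hp_diff t).hasDerivAt)
      (fun t _ => (hu.differentiable_iterate_deriv m.lt_succ_self t).hasDerivAt)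
      ((hp.continuous_deriv le_add_self).intervalIntegrable a b) (hu_cont.intervalIntegrable a b),
      ha m m.lt_succ_self, hb m m.lt_succ_self,
      ih hp' (by rw [← Function.iterate_succ_apply, hpm]) (hu.of_le (by norm_cast; omega))
        (fun k hk => ha k (hk.trans m.lt_succ_self)) (fun k hk => hb k (hk.trans m.lt_succ_self))]
    simp

theorem integral_sq_le_integral_add_sq_of_integral_mul_eq_zero {f g : ℝ → ℝ} (hab : a ≤ b)
    (hf : Continuous f) (hg : Continuous g) (hfg : ∫ t in a..b, f t * g t = 0) :
    ∫ t in a..b, f t ^ 2 ≤ ∫ t in a..b, (f t + g t) ^ 2 := by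
  have hf2 : IntervalIntegrable (fun t => f t ^ 2) MeasureTheory.volume a b :=
    (hf.pow 2).intervalIntegrable a b
  have hfg2 : IntervalIntegrable (fun t => 2 * (f t * g t)) MeasureTheory.volume a b :=
    (continuous_const.mul (hf.mul hg)).intervalIntegrable a b
  have hg2 : IntervalIntegrable (fun t => g t ^ 2) MeasureTheory.volume a b :=
    (hg.pow 2).intervalIntegrable a b
  have hpythagoras :
      ∫ t in a..b, (f t + g t) ^ 2 = (∫ t in a..b, f t ^ 2) + ∫ t in a..b, g t ^ 2 := by
    rw [integral_congr fun t _ =>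
        show (f t + g t) ^ 2 = f t ^ 2 + (2 * (f t * g t) + g t ^ 2) by ring,
      integral_add hf2 (hfg2.add hg2), integral_add hfg2 hg2, integral_const_mul, hfg]
    ring
  rw [hpythagoras]
  linarith [integral_nonneg (μ := MeasureTheory.volume) hab fun t _ => sq_nonneg (g t)]

theorem integral_sq_iterate_deriv_le (n : ℕ) (hab : a ≤ b) {p x : ℝ → ℝ}
    (hp : ContDiff ℝ (2 * n : ℕ) p) (hp₂ₙ : deriv^[2 * n] p = 0) (hx : ContDiff ℝ n x)
    (ha : ∀ k < n, deriv^[k] x a = deriv^[k] p a)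
    (hb : ∀ k < n, deriv^[k] x b = deriv^[k] p b) :
    ∫ t in a..b, deriv^[n] p t ^ 2 ≤ ∫ t in a..b, deriv^[n] x t ^ 2 := by
  have hpn : ContDiff ℝ n p := hp.of_le (by norm_cast; omega)
  have hsub : ∀ k ≤ n, deriv^[k] (x - p) = deriv^[k] x - deriv^[k] p :=
    fun k hk => iterate_deriv_sub hx hpn hk
  have hu : ContDiff ℝ n (x - p) := hx.sub hpn
  have horth : ∫ t in a..b, deriv^[n] p t * deriv^[n] (x - p) t = 0 := by
    refine integral_mul_iterate_deriv_eq_zero n (ContDiff.iterate_deriv' n n (by rwa [← two_mul]))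
      (by rw [← Function.iterate_add_apply, ← two_mul, hp₂ₙ]) hu ?_ ?_
    · intro k hk; simp [hsub k hk.le, ha k hk]
    · intro k hk; simp [hsub k hk.le, hb k hk]
  have := integral_sq_le_integral_add_sq_of_integral_mul_eq_zero hab
    (hpn.continuous_iterate_deriv le_rfl) (hu.continuous_iterate_deriv le_rfl) horth
  simpa only [hsub n le_rfl, Pi.sub_apply, add_sub_cancel] using this

end Orthogonality

section MinimumJerk

open Polynomial

noncomputable def minJerkPoly (x₀ xT T : ℝ) : ℝ[X] :=
  C x₀ + C (xT - x₀) * (C (10 / T ^ 3) * X ^ 3 - C (15 / T ^ 4) * X ^ 4 + C (6 / T ^ 5) * X ^ 5)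

variable (x₀ xT T : ℝ)

theorem eval_minJerkPoly (t : ℝ) : (minJerkPoly x₀ xT T).eval t =
    x₀ + (xT - x₀) * (10 * (t / T) ^ 3 - 15 * (t / T) ^ 4 + 6 * (t / T) ^ 5) := by
  simp only [minJerkPoly, eval_add, eval_mul, eval_sub, eval_C, eval_pow, eval_X]
  ring

theorem natDegree_minJerkPoly_le : (minJerkPoly x₀ xT T).natDegree ≤ 5 := by
  unfold minJerkPoly
  compute_degree

end MinimumJerk

/-- (Minimum-jerk principle of Flash and Hogan.) Among all `C³`
motions from `x₀` to `x_T` in time `T > 0` beginning and ending with zero velocity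
and zero acceleration, the integrated squared jerk `∫₀ᵀ x'''(t)² dt` is minimized by
the quintic `q(t) = x₀ + (x_T − x₀)(10(t/T)³ − 15(t/T)⁴ + 6(t/T)⁵)`. -/
theorem stmt_15 (T x₀ xT : ℝ) (hT : 0 < T)
    (q : ℝ → ℝ)
    (hq : q = fun t =>
      x₀ + (xT - x₀) * (10 * (t / T) ^ 3 - 15 * (t / T) ^ 4 + 6 * (t / T) ^ 5)) :
    ∀ x : ℝ → ℝ, ContDiff ℝ 3 x →
      x 0 = x₀ → x T = xT →
      deriv x 0 = 0 → deriv x T = 0 →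
      deriv (deriv x) 0 = 0 → deriv (deriv x) T = 0 →
      (∫ t in (0 : ℝ)..T, deriv (deriv (deriv q)) t ^ 2)
        ≤ ∫ t in (0 : ℝ)..T, deriv (deriv (deriv x)) t ^ 2 := by
  intro x hx hx0 hxT hx'0 hx'T hx''0 hx''T
  have hq_poly : q = fun t => (minJerkPoly x₀ xT T).eval t := by
    rw [hq]; ext t; rw [eval_minJerkPoly]
  have hq_iter (k : ℕ) :
      deriv^[k] q = fun t => (Polynomial.derivative^[k] (minJerkPoly x₀ xT T)).eval t := by
    rw [hq_poly, Polynomial.iterate_deriv_eval]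
  refine integral_sq_iterate_deriv_le 3 hT.le (by rw [hq]; fun_prop) ?_ hx ?_ ?_
  · rw [hq_iter, Polynomial.iterate_derivative_eq_zero
      (Nat.lt_succ_of_le (natDegree_minJerkPoly_le x₀ xT T))]
    exact funext fun _ => Polynomial.eval_zero
  · intro k hk
    rw [hq_iter]
    interval_cases k <;> simp [minJerkPoly, hx0, hx'0, hx''0]
  · intro k hk
    rw [hq_iter]
    have hT0 : T ≠ 0 := hT.ne'
    interval_cases k <;> simp [minJerkPoly, hxT, hx'T, hx''T, -zero_eq_mul] <;> field_simp <;> ring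
end

section
/- Let s ↦ (t,x,v,a,p_t,p_x,p_v,p_a)(s) be a differentiable solution of the 1D Hamiltonian geodesic system (H1) on an interval where h(s) = p_t + v(s)·p_x + a(s)·p_v(s) never vanishes. Then, reparameterizing by the time variable t (i.e. d/dt = (1/h(s))·d/ds, which is possible since t'(s) = h(s) ≠ 0), the dual variables satisfy dp_a/dt = −p_v, dp_v/dt = −p_x, dp_x/dt = 0, dp_t/dt = 0; in particular, p_a expressed as a function of t is a polynomial of degree at most two. -/
/-!
Since `t' = h ≠ 0`, the inverse `τ` of `t` has derivative `1 / h`, so by the chain rule every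
equation `p' = q · h` of (H1) becomes `dp/dt = q`. Thus `p_x ∘ τ` is constant, `p_v ∘ τ` affine and
`p_a ∘ τ` quadratic, since functions with equal derivatives on a connected open set differ by a
constant.
-/

open Filter Set Topology

theorem HasDerivAt.comp_of_local_left_inverse {𝕜 : Type*} [NontriviallyNormedField 𝕜]
    {f t τ : 𝕜 → 𝕜} {c d u : 𝕜} (hf : HasDerivAt f (c * d) (τ u)) (ht : HasDerivAt t d (τ u))
    (hd : d ≠ 0) (hτ : ContinuousAt τ u) (hinv : ∀ᶠ w in 𝓝 u, t (τ w) = w) :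
    HasDerivAt (f ∘ τ) c u :=
  (hf.comp u (ht.of_local_left_inverse hτ hd hinv)).congr_deriv (by field_simp)

theorem IsOpen.exists_eq_add_of_hasDerivAt_eq {U : Set ℝ} (hU : IsOpen U)
    (hU' : IsPreconnected U) {f g φ : ℝ → ℝ} (hf : ∀ u ∈ U, HasDerivAt f (φ u) u)
    (hg : ∀ u ∈ U, HasDerivAt g (φ u) u) : ∃ c, ∀ u ∈ U, f u = g u + c :=
  hU.exists_eq_add_of_deriv_eq hU' (fun u hu => (hf u hu).differentiableAt.differentiableWithinAt)
    (fun u hu => (hg u hu).differentiableAt.differentiableWithinAt)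
    (fun u hu => by simp only [(hf u hu).deriv, (hg u hu).deriv])

theorem IsOpen.exists_quadratic_of_hasDerivAt {U : Set ℝ} (hU : IsOpen U)
    (hU' : IsPreconnected U) {f g k : ℝ → ℝ} (hf : ∀ u ∈ U, HasDerivAt f (g u) u)
    (hg : ∀ u ∈ U, HasDerivAt g (k u) u) (hk : ∀ u ∈ U, HasDerivAt k 0 u) :
    ∃ c₀ c₁ c₂ : ℝ, ∀ u ∈ U, f u = c₀ + c₁ * u + c₂ * u ^ 2 := by
  obtain ⟨c, hkc⟩ := hU.exists_eq_add_of_hasDerivAt_eq hU' hk fun u _ => hasDerivAt_const u 0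
  have hlin (u : ℝ) : HasDerivAt (fun w => c * w) c u := by
    simpa using (hasDerivAt_id u).const_mul c
  obtain ⟨b, hgb⟩ := hU.exists_eq_add_of_hasDerivAt_eq hU'
    (fun u hu => (hg u hu).congr_deriv (by simp [hkc u hu])) fun u _ => hlin u
  have hquad (u : ℝ) : HasDerivAt (fun w => b * w + c / 2 * w ^ 2) (c * u + b) u := by
    refine (((hasDerivAt_id' u).const_mul b).add
      ((hasDerivAt_pow 2 u).const_mul (c / 2))).congr_deriv ?_
    push_cast; ring
  obtain ⟨a, hfa⟩ := hU.exists_eq_add_of_hasDerivAt_eq hU'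
    (fun u hu => (hf u hu).congr_deriv (hgb u hu)) fun u _ => hquad u
  exact ⟨a, b, c / 2, fun u hu => by rw [hfa u hu]; ring⟩

theorem stmt_16_general
    (S₀ S₁ : ℝ)
    (t pt px pv pa : ℝ → ℝ)
    (h : ℝ → ℝ)
    (hpt : ∀ s ∈ Set.Ioo S₀ S₁, HasDerivAt pt 0 s)
    (hpx : ∀ s ∈ Set.Ioo S₀ S₁, HasDerivAt px 0 s)
    (hpv : ∀ s ∈ Set.Ioo S₀ S₁, HasDerivAt pv (-(px s) * h s) s)
    (hpa : ∀ s ∈ Set.Ioo S₀ S₁, HasDerivAt pa (-(pv s) * h s) s)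
    (ht : ∀ s ∈ Set.Ioo S₀ S₁, HasDerivAt t (h s) s)
    (hne : ∀ s ∈ Set.Ioo S₀ S₁, h s ≠ 0) :
    ∀ (U : Set ℝ) (τ : ℝ → ℝ), IsOpen U → Convex ℝ U →
      Set.MapsTo τ U (Set.Ioo S₀ S₁) → ContinuousOn τ U →
      (∀ u ∈ U, t (τ u) = u) →
      ((∀ u ∈ U,
          HasDerivAt (pa ∘ τ) (-(pv (τ u))) u ∧
          HasDerivAt (pv ∘ τ) (-(px (τ u))) u ∧
          HasDerivAt (px ∘ τ) 0 u ∧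
          HasDerivAt (pt ∘ τ) 0 u) ∧
        ∃ c₀ c₁ c₂ : ℝ, ∀ u ∈ U, pa (τ u) = c₀ + c₁ * u + c₂ * u ^ 2) := by
  intro U τ hUopen hUconv hmaps hτ hinv
  have reparam {f g : ℝ → ℝ} (hf : ∀ s ∈ Ioo S₀ S₁, HasDerivAt f (g s * h s) s) (u : ℝ)
      (hu : u ∈ U) : HasDerivAt (f ∘ τ) (g (τ u)) u :=
    (hf _ (hmaps hu)).comp_of_local_left_inverse (ht _ (hmaps hu)) (hne _ (hmaps hu))
      (hτ.continuousAt (hUopen.mem_nhds hu)) (eventually_of_mem (hUopen.mem_nhds hu) hinv)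
  have hpa' := reparam hpa
  have hpv' := reparam hpv
  have hpx' := reparam (g := 0) fun s hs => by simpa using hpx s hs
  have hpt' := reparam (g := 0) fun s hs => by simpa using hpt s hs
  refine ⟨fun u hu => ⟨hpa' u hu, hpv' u hu, hpx' u hu, hpt' u hu⟩, ?_⟩
  exact hUopen.exists_quadratic_of_hasDerivAt hUconv.isPreconnected hpa'
    (g := fun u => -pv (τ u)) (k := px ∘ τ)
    (fun u hu => (hpv' u hu).neg.congr_deriv (neg_neg _)) hpx'

/-- Along a solution of (H1) on an open interval where
`h = p_t + v·p_x + a·p_v` never vanishes, one can reparameterize by the time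
variable `t` (possible since `t' = h ≠ 0`): for any local inverse `τ` of `t`, the
dual variables satisfy `dp_a/dt = −p_v`, `dp_v/dt = −p_x`, `dp_x/dt = 0`,
`dp_t/dt = 0`; in particular `p_a`, as a function of `t`, is a polynomial of degree
at most two. -/
theorem stmt_16
    (S₀ S₁ : ℝ)
    (t x v a pt px pv pa : ℝ → ℝ)
    (h : ℝ → ℝ)
    (hh : ∀ s, h s = pt s + v s * px s + a s * pv s)
    (hpt : ∀ s ∈ Set.Ioo S₀ S₁, HasDerivAt pt 0 s)
    (hpx : ∀ s ∈ Set.Ioo S₀ S₁, HasDerivAt px 0 s)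
    (hpv : ∀ s ∈ Set.Ioo S₀ S₁, HasDerivAt pv (-(px s) * h s) s)
    (hpa : ∀ s ∈ Set.Ioo S₀ S₁, HasDerivAt pa (-(pv s) * h s) s)
    (ht : ∀ s ∈ Set.Ioo S₀ S₁, HasDerivAt t (h s) s)
    (hx : ∀ s ∈ Set.Ioo S₀ S₁, HasDerivAt x (v s * h s) s)
    (hv : ∀ s ∈ Set.Ioo S₀ S₁, HasDerivAt v (a s * h s) s)
    (ha : ∀ s ∈ Set.Ioo S₀ S₁, HasDerivAt a (pa s) s)
    (hne : ∀ s ∈ Set.Ioo S₀ S₁, h s ≠ 0) :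
    ∀ (U : Set ℝ) (τ : ℝ → ℝ), IsOpen U → Convex ℝ U →
      Set.MapsTo τ U (Set.Ioo S₀ S₁) → ContinuousOn τ U →
      (∀ u ∈ U, t (τ u) = u) →
      ((∀ u ∈ U,
          HasDerivAt (pa ∘ τ) (-(pv (τ u))) u ∧
          HasDerivAt (pv ∘ τ) (-(px (τ u))) u ∧
          HasDerivAt (px ∘ τ) 0 u ∧
          HasDerivAt (pt ∘ τ) 0 u) ∧
        ∃ c₀ c₁ c₂ : ℝ, ∀ u ∈ U, pa (τ u) = c₀ + c₁ * u + c₂ * u ^ 2) :=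
  stmt_16_general S₀ S₁ t pt px pv pa h hpt hpx hpv hpa ht hne
end
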